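/- The function t ↦ log(cosh(√t)) is concave on the interval [0, ∞). -/

import Mathlib

/-!
On `(0, ∞)` the derivative of `t ↦ log (cosh √t)` is `tanh √t / (2 √t)`. Since `√` is monotone,
concavity reduces to `x ↦ tanh x / x` being antitone on `(0, ∞)`, and the numerator
`x - sinh x cosh x = x - sinh (2x) / 2` of its derivative is nonpositive because `x ≤ sinh x`
for `x ≥ 0`.
-/

open Real Set

lemma self_le_sinh_mul_cosh {x : ℝ} (hx : 0 ≤ x) : x ≤ sinh x * cosh x := by
  have h := self_le_sinh_iff.mpr (by positivity : 0 ≤ 2 * x)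
  rw [sinh_two_mul] at h
  linarith

lemma hasDerivAt_tanh_div_self {x : ℝ} (hx : x ≠ 0) :
    HasDerivAt (fun x => tanh x / x) ((x - sinh x * cosh x) / (x * cosh x) ^ 2) x := by
  have hfun : (fun x => tanh x / x) = fun y => sinh y / (y * cosh y) := by
    ext y
    rw [tanh_eq_sinh_div_cosh, div_div, mul_comm (cosh y)]
  rw [hfun]
  refine ((hasDerivAt_sinh x).fun_div ((hasDerivAt_id' x).fun_mul (hasDerivAt_cosh x))
    (mul_ne_zero hx (cosh_pos x).ne')).congr_deriv ?_
  congr 1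
  linear_combination x * cosh_sq_sub_sinh_sq x

lemma antitoneOn_tanh_div_self : AntitoneOn (fun x => tanh x / x) (Ioi 0) := by
  have hderiv : ∀ x ∈ Ioi (0 : ℝ), HasDerivAt (fun x => tanh x / x)
      ((x - sinh x * cosh x) / (x * cosh x) ^ 2) x :=
    fun x hx => hasDerivAt_tanh_div_self (ne_of_gt hx)
  refine antitoneOn_of_hasDerivWithinAt_nonpos
    (f' := fun x => (x - sinh x * cosh x) / (x * cosh x) ^ 2) (convex_Ioi 0)
    (fun x hx => (hderiv x hx).continuousAt.continuousWithinAt) ?_ ?_ <;> rw [interior_Ioi]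
  · exact fun x hx => (hderiv x hx).hasDerivWithinAt
  · intro x hx
    have := self_le_sinh_mul_cosh (le_of_lt hx)
    exact div_nonpos_of_nonpos_of_nonneg (by linarith) (sq_nonneg _)

lemma hasDerivAt_log_cosh_sqrt {t : ℝ} (ht : 0 < t) :
    HasDerivAt (fun t => log (cosh √t)) (tanh √t / √t / 2) t := by
  have hsqrt := (sqrt_pos.mpr ht).ne'
  convert (hasDerivAt_sqrt ht.ne').cosh.log (cosh_pos _).ne' using 1
  rw [tanh_eq_sinh_div_cosh]
  field_simp

theorem log_cosh_sqrt_concave :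
    ConcaveOn ℝ (Set.Ici (0 : ℝ)) (fun t => Real.log (Real.cosh (Real.sqrt t))) := by
  have hderiv : ∀ t ∈ Ioi (0 : ℝ), deriv (fun t => log (cosh √t)) t = tanh √t / √t / 2 :=
    fun t ht => (hasDerivAt_log_cosh_sqrt ht).deriv
  refine AntitoneOn.concaveOn_of_deriv (convex_Ici 0)
    ((continuous_cosh.comp continuous_sqrt).continuousOn.log fun t _ => (cosh_pos _).ne') ?_ ?_
  · rw [interior_Ici]
    exact fun t ht => (hasDerivAt_log_cosh_sqrt ht).differentiableAt.differentiableWithinAt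
  · rw [interior_Ici]
    intro s hs t ht hst
    rw [hderiv s hs, hderiv t ht]
    exact div_le_div_of_nonneg_right
      (antitoneOn_tanh_div_self (sqrt_pos.mpr hs) (sqrt_pos.mpr ht) (sqrt_le_sqrt hst)) two_pos.le
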